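/- With the extremal setup below, assume further that v₁v_n is the unique negative edge of Γ′ and that x_n ≤ x₁. Then, for all sufficiently large n, x_i > 0 for every i with 1 ≤ i ≤ n−1. -/

import Mathlib

open Matrix

/-- A signed graph of order `n`: a real symmetric `n × n` matrix with zero diagonal
whose off-diagonal entries lie in `{-1, 0, 1}`. -/
def IsSignedGraph {n : ℕ} (A : Matrix (Fin n) (Fin n) ℝ) : Prop :=
  A.IsSymm ∧ (∀ i, A i i = 0) ∧ ∀ i j, A i j = -1 ∨ A i j = 0 ∨ A i j = 1

/-- The index (largest eigenvalue) of a signed graph. -/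
noncomputable def lambdaMax {n : ℕ} (A : Matrix (Fin n) (Fin n) ℝ) : ℝ :=
  sSup (spectrum ℝ A)

/-- The smallest eigenvalue of a signed graph. -/
noncomputable def lambdaMin {n : ℕ} (A : Matrix (Fin n) (Fin n) ℝ) : ℝ :=
  sInf (spectrum ℝ A)

/-- The spectral radius of a signed graph. -/
noncomputable def rho {n : ℕ} (A : Matrix (Fin n) (Fin n) ℝ) : ℝ :=
  max (lambdaMax A) (-(lambdaMin A))

/-- There is a cycle, all of whose vertices lie in `s`, along whose edges
the product of the entries of `A` is negative. -/
def HasNegCycleOn {n : ℕ} (A : Matrix (Fin n) (Fin n) ℝ) (s : Set (Fin n)) : Prop :=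
  ∃ m : ℕ, 3 ≤ m ∧ ∃ c : ℕ → Fin n,
    (∀ i < m, ∀ j < m, c i = c j → i = j) ∧ (∀ i < m, c i ∈ s) ∧
    (∀ i < m, A (c i) (c ((i + 1) % m)) ≠ 0) ∧
    (∏ i ∈ Finset.range m, A (c i) (c ((i + 1) % m))) < 0

/-- A signed graph is unbalanced if it has a negative cycle. -/
def IsUnbalanced {n : ℕ} (A : Matrix (Fin n) (Fin n) ℝ) : Prop :=
  HasNegCycleOn A Set.univ

/-- An `m`-element set of pairwise adjacent vertices whose induced signed complete
subgraph is unbalanced. -/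
def IsKmMinus {n : ℕ} (A : Matrix (Fin n) (Fin n) ℝ) (m : ℕ) (s : Finset (Fin n)) : Prop :=
  s.card = m ∧ (∀ i ∈ s, ∀ j ∈ s, i ≠ j → A i j ≠ 0) ∧ HasNegCycleOn A ↑s

/-- A `K₄⁻` of a signed graph. -/
def IsK4Minus {n : ℕ} (A : Matrix (Fin n) (Fin n) ℝ) (s : Finset (Fin n)) : Prop :=
  IsKmMinus A 4 s

/-- A signed graph is `t𝒦₄⁻`-free if it contains fewer than `t` distinct `K₄⁻`'s. -/
def TK4Free {n : ℕ} (t : ℕ) (A : Matrix (Fin n) (Fin n) ℝ) : Prop :=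
  {s : Finset (Fin n) | IsK4Minus A s}.ncard < t

/-- Switching isomorphism of signed graphs: `B = (PD) A (PD)ᵀ` for a permutation
matrix `P` and a `±1` diagonal matrix `D`. -/
def SwitchIso {n : ℕ} (A B : Matrix (Fin n) (Fin n) ℝ) : Prop :=
  ∃ (σ : Equiv.Perm (Fin n)) (d : Fin n → ℝ), (∀ i, d i = 1 ∨ d i = -1) ∧
    B = (σ.permMatrix ℝ * Matrix.diagonal d) * A * (σ.permMatrix ℝ * Matrix.diagonal d)ᵀ

/-- The signed graph `Γ_{s,n}`: the vertices `0, …, n-2` are pairwise adjacent,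
the last vertex `n-1` is adjacent exactly to `0, …, s`, and every edge is positive
except the single negative edge joining `n-1` and `0`. -/
noncomputable def GammaSN (s n : ℕ) : Matrix (Fin n) (Fin n) ℝ :=
  fun i j =>
    if i = j then 0
    else if i.val ≠ n - 1 ∧ j.val ≠ n - 1 then 1
    else if min i.val j.val = 0 then -1
    else if min i.val j.val ≤ s then 1
    else 0

/-- The signed graph `Σ_{k,n}` with parameter `r`: vertex `0` is `u₁`, vertex `1` is `u₂`,
vertices `2, …, r+1` are `w₁, …, w_r`, vertices `r+2, …, r+k+1` are `q₁, …, q_k`, and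
vertices `r+k+2, …, n-1` are `v₁, …, v_{n-2-r-k}`.  The only negative edge is `u₁u₂`. -/
noncomputable def SigmaKN (r k n : ℕ) : Matrix (Fin n) (Fin n) ℝ :=
  fun i j =>
    if i = j then 0
    else if min i.val j.val = 0 then (if max i.val j.val = 1 then -1 else 1)
    else if min i.val j.val = 1 then (if max i.val j.val ≤ r + k + 1 then 1 else 0)
    else if max i.val j.val ≤ r + 1 then 1
    else if max i.val j.val ≤ r + k + 1 then 0
    else 1

/-!
If some coordinate `x i` vanished, then `λ₁(A) = xᵀ A x ≤ (∑ x)² - ∑ x² ≤ (n - 2) ∑ x²`,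
the last step being Cauchy–Schwarz on the `n - 1` coordinates that may be nonzero, so
`λ₁(A) ≤ n - 2`. On the other hand `Γ_{2,n}` is unbalanced and has a single `K₄⁻`, so it competes
with `A` as soon as `t ≥ 2`; its vertices `0, …, n - 2` span a positive `K_{n-1}`, whose Rayleigh
quotient `n - 2` is strictly increased by a small perturbation towards the last vertex, because
that vertex has one more positive than negative neighbour. Hence `λ₁(A) ≥ λ₁(Γ_{2,n}) > n - 2`.
-/

open Finset SimpleGraph

section
variable {ι : Type*} [Fintype ι]

lemma dotProduct_adjMatrix_completeGraph_mulVec [DecidableEq ι] (x : ι → ℝ) :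
    x ⬝ᵥ (completeGraph ι).adjMatrix ℝ *ᵥ x = (∑ i, x i) ^ 2 - x ⬝ᵥ x := by
  rw [adjMatrix_completeGraph_eq_of_one_sub_one, sub_mulVec, one_mulVec, dotProduct_sub]
  simp [dotProduct, mulVec, sq, sum_mul]

lemma dotProduct_mulVec_le_of_le {A B : Matrix ι ι ℝ} (hAB : ∀ i j, A i j ≤ B i j) {x : ι → ℝ}
    (hx : 0 ≤ x) : x ⬝ᵥ A *ᵥ x ≤ x ⬝ᵥ B *ᵥ x := by
  simp only [dotProduct, mulVec]
  gcongr with i _ j _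
  · exact hx i
  · exact hx j
  · exact hAB i j

lemma dotProduct_mulVec_congr {A B : Matrix ι ι ℝ} {x : ι → ℝ}
    (hAB : ∀ i j, x i ≠ 0 → x j ≠ 0 → A i j = B i j) : x ⬝ᵥ A *ᵥ x = x ⬝ᵥ B *ᵥ x := by
  simp only [dotProduct, mulVec]
  refine sum_congr rfl fun i _ => ?_
  rcases eq_or_ne (x i) 0 with hi | hi
  · simp [hi]
  congr 1
  refine sum_congr rfl fun j _ => ?_
  rcases eq_or_ne (x j) 0 with hj | hj
  · simp [hj]
  rw [hAB i j hi hj]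

lemma sq_sum_le_card_sub_one_mul [DecidableEq ι] {x : ι → ℝ} {i : ι} (hi : x i = 0) :
    (∑ j, x j) ^ 2 ≤ (Fintype.card ι - 1 : ℝ) * (x ⬝ᵥ x) := by
  have h := sq_sum_le_card_mul_sum_sq (s := univ.erase i) (f := x)
  rw [card_erase_of_mem (mem_univ i), card_univ] at h
  rw [← sum_erase _ hi]
  have hsq : ∑ j ∈ univ.erase i, x j ^ 2 = x ⬝ᵥ x := by
    rw [sum_erase _ (by simp [hi])]; simp [dotProduct, sq]
  rw [hsq] at h
  have hc : 1 ≤ Fintype.card ι := Fintype.card_pos_iff.mpr ⟨i⟩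
  exact_mod_cast h

lemma eigenvalue_le_card_sub_two [DecidableEq ι] {A : Matrix ι ι ℝ} {x : ι → ℝ} {μ : ℝ} {i : ι}
    (hA : ∀ i j, A i j ≤ (completeGraph ι).adjMatrix ℝ i j) (hx : 0 ≤ x) (hx0 : x ≠ 0)
    (heig : A *ᵥ x = μ • x) (hi : x i = 0) : μ ≤ Fintype.card ι - 2 := by
  have hpos : 0 < x ⬝ᵥ x := by simpa using dotProduct_star_self_pos_iff.mpr hx0
  have key : μ * (x ⬝ᵥ x) ≤ (Fintype.card ι - 2) * (x ⬝ᵥ x) :=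
    calc μ * (x ⬝ᵥ x) = x ⬝ᵥ A *ᵥ x := by rw [heig, dotProduct_smul, smul_eq_mul]
      _ ≤ x ⬝ᵥ (completeGraph ι).adjMatrix ℝ *ᵥ x := dotProduct_mulVec_le_of_le hA hx
      _ = (∑ j, x j) ^ 2 - x ⬝ᵥ x := dotProduct_adjMatrix_completeGraph_mulVec x
      _ ≤ (Fintype.card ι - 2) * (x ⬝ᵥ x) := by linarith [sq_sum_le_card_sub_one_mul hi]
  exact le_of_mul_le_mul_right key hpos

lemma dotProduct_mulVec_add_single [DecidableEq ι] {A : Matrix ι ι ℝ} (hA : A.IsSymm)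
    (u : ι → ℝ) (p : ι) (c : ℝ) : (u + Pi.single p c) ⬝ᵥ A *ᵥ (u + Pi.single p c) =
      u ⬝ᵥ A *ᵥ u + 2 * c * (A *ᵥ u) p + c ^ 2 * A p p := by
  have hsym : Pi.single p c ⬝ᵥ A *ᵥ u = u ⬝ᵥ A *ᵥ Pi.single p c := by
    rw [dotProduct_mulVec, ← mulVec_transpose, hA.eq, dotProduct_comm]
  simp only [mulVec_add, add_dotProduct, dotProduct_add, ← hsym]
  simp [single_dotProduct, mulVec_single, sq]
  ring
end

lemma dotProduct_mulVec_le_lambdaMax_mul {n : ℕ} {A : Matrix (Fin n) (Fin n) ℝ} (hA : A.IsSymm)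
    (y : Fin n → ℝ) : y ⬝ᵥ A *ᵥ y ≤ lambdaMax A * (y ⬝ᵥ y) := by
  have hpsd : (algebraMap ℝ _ (lambdaMax A) - A).PosSemidef := by
    refine posSemidef_iff_isHermitian_and_spectrum_nonneg.mpr ⟨?_, ?_⟩
    · simpa [IsHermitian, IsSymm, Algebra.algebraMap_eq_smul_one] using hA
    · rw [← spectrum.singleton_sub_eq]
      rintro _ ⟨_, rfl, μ, hμ, rfl⟩
      exact sub_nonneg.mpr (le_csSup (A.finite_spectrum.bddAbove) hμ)
  have := hpsd.dotProduct_mulVec_nonneg y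
  simpa [sub_mulVec, Algebra.algebraMap_eq_smul_one, smul_mulVec, dotProduct_sub] using this

lemma lt_lambdaMax_of_dotProduct_mulVec_eq {n : ℕ} {A : Matrix (Fin n) (Fin n) ℝ} (hA : A.IsSymm)
    {u : Fin n → ℝ} {p : Fin n} {μ : ℝ} (hup : u p = 0) (hpp : A p p = 0)
    (hAu : 0 < (A *ᵥ u) p) (hμ : u ⬝ᵥ A *ᵥ u = μ * (u ⬝ᵥ u)) : μ < lambdaMax A := by
  have hray (ε : ℝ) : μ * (u ⬝ᵥ u) + 2 * ε * (A *ᵥ u) p ≤ lambdaMax A * (u ⬝ᵥ u + ε ^ 2) := by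
    have h := dotProduct_mulVec_le_lambdaMax_mul hA (u + Pi.single p ε)
    have hnorm := dotProduct_mulVec_add_single (A := 1) isSymm_one u p ε
    simp only [one_mulVec, hup, one_apply_eq] at hnorm
    rw [dotProduct_mulVec_add_single hA, hμ, hpp, hnorm] at h
    linarith
  have huu : 0 ≤ u ⬝ᵥ u := by simpa using dotProduct_star_self_nonneg u
  set a := (A *ᵥ u) p
  -- `ε` only needs `0 < ε` and `μ * ε < 2 * a`; this choice works whatever the sign of `μ`
  set ε := a / (|μ| + 1)
  have hε : 0 < ε := by positivity
  have hμε : μ * ε < a := by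
    have : (|μ| + 1) * ε = a := mul_div_cancel₀ a (by positivity)
    nlinarith [le_abs_self μ]
  by_contra! hle
  nlinarith [hray ε, mul_le_mul_of_nonneg_right hle (add_nonneg huu (sq_nonneg ε))]

lemma IsSignedGraph.le_adjMatrix_completeGraph {n : ℕ} {A : Matrix (Fin n) (Fin n) ℝ}
    (hA : IsSignedGraph A) (i j : Fin n) : A i j ≤ (completeGraph (Fin n)).adjMatrix ℝ i j := by
  rcases eq_or_ne i j with rfl | hij
  · simp [hA.2.1 i]
  · rcases hA.2.2 i j with h | h | h <;> simp [h, hij]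

lemma HasNegCycleOn.exists_neg {n : ℕ} {A : Matrix (Fin n) (Fin n) ℝ} {s : Set (Fin n)}
    (h : HasNegCycleOn A s) : ∃ i ∈ s, ∃ j ∈ s, A i j < 0 := by
  obtain ⟨m, hm, c, -, hmem, -, hprod⟩ := h
  by_contra! hcon
  have hm0 : 0 < m := by omega
  exact hprod.not_ge <| prod_nonneg fun i hi =>
    hcon _ (hmem i (mem_range.mp hi)) _ (hmem _ (Nat.mod_lt _ hm0))

lemma hasNegCycleOn_of_mul_mul_neg {n : ℕ} {A : Matrix (Fin n) (Fin n) ℝ} {s : Set (Fin n)}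
    {a b c : Fin n} (hab : a ≠ b) (hbc : b ≠ c) (hca : c ≠ a) (ha : a ∈ s) (hb : b ∈ s)
    (hc : c ∈ s) (hneg : A a b * A b c * A c a < 0) : HasNegCycleOn A s := by
  have hab0 : A a b ≠ 0 := by rintro h; simp [h] at hneg
  have hbc0 : A b c ≠ 0 := by rintro h; simp [h] at hneg
  have hca0 : A c a ≠ 0 := by rintro h; simp [h] at hneg
  refine ⟨3, le_rfl, fun i => if i = 0 then a else if i = 1 then b else c, ?_, ?_, ?_, ?_⟩
  · intro i hi j hj hij
    interval_cases i <;> interval_cases j <;> simp_all [eq_comm]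
  · intro i hi
    interval_cases i <;> simpa
  · intro i hi
    interval_cases i <;> simpa
  · simpa [prod_range_succ] using hneg

lemma isSignedGraph_gammaSN (s n : ℕ) : IsSignedGraph (GammaSN s n) := by
  refine ⟨?_, fun i => by simp [GammaSN], fun i j => by unfold GammaSN; split_ifs <;> norm_num⟩
  ext i j
  simp only [Matrix.transpose_apply, GammaSN, eq_comm (a := i), min_comm, and_comm]

section GammaSN
variable {s n : ℕ}

lemma gammaSN_apply_of_ne_last {i j : Fin n} (hij : i ≠ j) (hi : i.val ≠ n - 1)
    (hj : j.val ≠ n - 1) : GammaSN s n i j = 1 := by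
  simp [GammaSN, hij, hi, hj]

lemma gammaSN_last_apply (hn : n - 1 < n) {j : Fin n} (hj : j.val ≠ n - 1) :
    GammaSN s n ⟨n - 1, hn⟩ j = if j.val = 0 then -1 else if j.val ≤ s then 1 else 0 := by
  have hmin : min (n - 1) j.val = j.val := min_eq_right (by omega)
  simp [GammaSN, Fin.ext_iff, hmin, Ne.symm hj]

lemma isUnbalanced_gammaSN (hs : 1 ≤ s) (hn : 3 ≤ n) : IsUnbalanced (GammaSN s n) := by
  have hsymm := (isSignedGraph_gammaSN s n).1
  refine hasNegCycleOn_of_mul_mul_neg (a := ⟨0, by omega⟩) (b := ⟨1, by omega⟩)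
    (c := ⟨n - 1, by omega⟩) ?_ ?_ ?_ trivial trivial trivial ?_
  any_goals simp only [ne_eq, Fin.mk.injEq]; omega
  rw [gammaSN_apply_of_ne_last (by simp) (by simp; omega) (by simp; omega), ← hsymm.apply,
    gammaSN_last_apply _ (by simp; omega), gammaSN_last_apply _ (by simp; omega)]
  simp [hs]

lemma eq_of_isK4Minus_gammaSN_two (hn : 3 ≤ n) {S : Finset (Fin n)}
    (hS : IsK4Minus (GammaSN 2 n) S) :
    S = {⟨0, by omega⟩, ⟨1, by omega⟩, ⟨2, by omega⟩, ⟨n - 1, by omega⟩} := by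
  obtain ⟨hcard, hadj, hcyc⟩ := hS
  set p : Fin n := ⟨n - 1, by omega⟩
  have hp : p ∈ S := by
    obtain ⟨i, hi, j, hj, hneg⟩ := hcyc.exists_neg
    by_contra hpS
    have hi' : i.val ≠ n - 1 := Fin.val_ne_of_ne (ne_of_mem_of_not_mem hi hpS)
    have hj' : j.val ≠ n - 1 := Fin.val_ne_of_ne (ne_of_mem_of_not_mem hj hpS)
    rcases eq_or_ne i j with rfl | hij
    · simp [(isSignedGraph_gammaSN 2 n).2.1] at hneg
    · rw [gammaSN_apply_of_ne_last hij hi' hj'] at hneg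
      norm_num at hneg
  refine eq_of_subset_of_card_le (fun a ha => ?_) (hcard ▸ card_le_four)
  rcases eq_or_ne a p with rfl | hap
  · simp
  have ha' : a.val ≠ n - 1 := Fin.val_ne_of_ne hap
  have hpa := hadj p hp a ha hap.symm
  rw [gammaSN_last_apply _ ha'] at hpa
  have : a.val ≤ 2 := by
    by_contra! h
    rw [if_neg (by omega), if_neg (by omega)] at hpa
    exact hpa rfl
  simp only [mem_insert, mem_singleton, Fin.ext_iff]
  omega

lemma tk4Free_gammaSN_two {t : ℕ} (ht : 2 ≤ t) (hn : 3 ≤ n) : TK4Free t (GammaSN 2 n) :=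
  calc {S | IsK4Minus (GammaSN 2 n) S}.ncard
      ≤ ({{⟨0, by omega⟩, ⟨1, by omega⟩, ⟨2, by omega⟩, ⟨n - 1, by omega⟩}} : Set _).ncard :=
        Set.ncard_le_ncard (fun _ hS => eq_of_isK4Minus_gammaSN_two hn hS)
    _ < t := by rw [Set.ncard_singleton]; omega

lemma lt_lambdaMax_gammaSN_two (hn : 4 ≤ n) : (n : ℝ) - 2 < lambdaMax (GammaSN 2 n) := by
  set p : Fin n := ⟨n - 1, by omega⟩
  set u : Fin n → ℝ := fun j => if j = p then 0 else 1
  have hsum : ∑ j, u j = n - 1 := by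
    simp [u, sum_ite, filter_ne', Nat.cast_sub (by omega : 1 ≤ n)]
  have huu : u ⬝ᵥ u = n - 1 := by
    rw [← hsum]
    exact sum_congr rfl fun j _ => by by_cases j = p <;> simp [u, *]
  have hquad : u ⬝ᵥ GammaSN 2 n *ᵥ u = (n - 2) * (u ⬝ᵥ u) := by
    rw [dotProduct_mulVec_congr (B := (completeGraph (Fin n)).adjMatrix ℝ),
      dotProduct_adjMatrix_completeGraph_mulVec, hsum, huu]
    · ring
    intro i j hi hj
    have hi' : i.val ≠ n - 1 := Fin.val_ne_of_ne (j := p) (by rintro rfl; simp [u] at hi)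
    have hj' : j.val ≠ n - 1 := Fin.val_ne_of_ne (j := p) (by rintro rfl; simp [u] at hj)
    rcases eq_or_ne i j with rfl | hij
    · simp [(isSignedGraph_gammaSN 2 n).2.1]
    · simp [gammaSN_apply_of_ne_last hij hi' hj', hij]
  have hrow : (GammaSN 2 n *ᵥ u) p = 1 := by
    have hval (j : Fin n) (hj : j.val < 3) : GammaSN 2 n p j * u j =
        if j.val = 0 then -1 else 1 := by
      have hjp : j ≠ p := by rintro rfl; simp [p] at hj; omega
      rw [gammaSN_last_apply _ (Fin.val_ne_of_ne hjp)]
      simp [u, hjp, show j.val ≤ 2 by omega]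
    have hzero (j : Fin n) (hj : ¬ j.val < 3) : GammaSN 2 n p j * u j = 0 := by
      rcases eq_or_ne j p with rfl | hjp
      · simp [u]
      · rw [gammaSN_last_apply _ (Fin.val_ne_of_ne hjp), if_neg (by omega), if_neg (by omega),
          zero_mul]
    have hsub : ∀ j ∉ ({⟨0, by omega⟩, ⟨1, by omega⟩, ⟨2, by omega⟩} : Finset (Fin n)),
        GammaSN 2 n p j * u j = 0 := fun j hj =>
      hzero j (by simp only [mem_insert, mem_singleton, Fin.ext_iff] at hj; omega)
    rw [mulVec, dotProduct, ← sum_subset (subset_univ _) fun j _ => hsub j,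
      sum_insert (by simp), sum_insert (by simp), sum_singleton, hval _ (by simp),
      hval _ (by simp), hval _ (by simp)]
    norm_num
  exact lt_lambdaMax_of_dotProduct_mulVec_eq (isSignedGraph_gammaSN 2 n).1 (by simp [u])
    ((isSignedGraph_gammaSN 2 n).2.1 p) (by rw [hrow]; exact one_pos) hquad
end GammaSN

theorem extremal_eigenvector_positive (t : ℕ) (ht : 2 ≤ t) :
    ∃ N : ℕ, ∀ n : ℕ, ∀ _hn : N + 4 ≤ n, t ≤ (n - 2).choose 2 →
      ∀ (A : Matrix (Fin n) (Fin n) ℝ) (x : Fin n → ℝ),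
        IsSignedGraph A → IsUnbalanced A → TK4Free t A →
        (∀ B : Matrix (Fin n) (Fin n) ℝ,
          IsSignedGraph B → IsUnbalanced B → TK4Free t B → lambdaMax B ≤ lambdaMax A) →
        (∀ i, 0 ≤ x i) → (∑ i, x i ^ 2) = 1 → A.mulVec x = lambdaMax A • x →
        let v1 : Fin n := ⟨0, by omega⟩
        let v2 : Fin n := ⟨1, by omega⟩
        let vn : Fin n := ⟨n - 1, by omega⟩
        A v1 vn < 0 →
        (∀ i j : Fin n, A i j < 0 → (i = v1 ∧ j = vn) ∨ (i = vn ∧ j = v1)) →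
        x vn ≤ x v1 →
        ∀ i : Fin n, i.val < n - 1 → 0 < x i := by
  refine ⟨0, fun n hn _ A x hA _ _ hmax hx0 hx1 heig => ?_⟩
  intro _ _ _ _ _ _ i _
  refine (hx0 i).lt_of_ne' fun hxi => ?_
  have hx : x ≠ 0 := by rintro rfl; simp at hx1
  have hupper : lambdaMax A ≤ n - 2 := by
    simpa using eigenvalue_le_card_sub_two hA.le_adjMatrix_completeGraph hx0 hx heig hxi
  have hcompetitor := hmax _ (isSignedGraph_gammaSN 2 n)
    (isUnbalanced_gammaSN one_le_two (by omega)) (tk4Free_gammaSN_two ht (by omega))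
  linarith [lt_lambdaMax_gammaSN_two (n := n) (by omega)]
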